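/- Let G be a connected graph and r ≥ 2 an integer. The vertices of any isometric path of G^r all of whose edges join vertices at distance at least 2 in G ('red' isometric path) can be covered by 2r-1 isometric paths of G. -/

import Mathlib

open SimpleGraph

variable {V : Type*}

/-- A walk is an isometric path if it is a path and its length equals the distance
between its end-vertices. -/
def IsometricPath (G : SimpleGraph V) {u v : V} (p : G.Walk u v) : Prop :=
  p.IsPath ∧ p.length = G.dist u v

/-- `RootedCover G r k` : the vertices of every isometric path of `G` can be covered by
`k` many `r`-rooted isometric paths of `G`. -/
def RootedCover (G : SimpleGraph V) (r : V) (k : ℕ) : Prop :=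
  ∀ ⦃u v : V⦄ (p : G.Walk u v), IsometricPath G p →
    ∃ Q : Fin k → Σ w : V, G.Walk r w,
      (∀ i, IsometricPath G (Q i).2) ∧
      ∀ x ∈ p.support, ∃ i, x ∈ (Q i).2.support

/-- The isometric path complexity of `G` relative to a root `r`. -/
noncomputable def ipcoR (G : SimpleGraph V) (r : V) : ℕ := sInf {k | RootedCover G r k}

/-- The isometric path complexity of `G`. -/
noncomputable def ipco (G : SimpleGraph V) : ℕ := sInf {k | ∃ r, RootedCover G r k}

/-- The strong isometric path complexity of `G`. -/
noncomputable def sipco (G : SimpleGraph V) : ℕ := sInf {k | ∀ r, RootedCover G r k}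

/-- The `r`-th power of `G`: two distinct vertices are adjacent iff their distance in `G`
is at most `r`. -/
def SimpleGraph.power (G : SimpleGraph V) (r : ℕ) : SimpleGraph V where
  Adj u v := u ≠ v ∧ G.Reachable u v ∧ G.dist u v ≤ r
  symm := by
    refine ⟨?_⟩
    rintro u v ⟨h1, h2, h3⟩
    exact ⟨h1.symm, h2.symm, by rwa [G.dist_comm]⟩
  loopless := by refine ⟨?_⟩; rintro u ⟨h1, -, -⟩; exact h1 rfl

/-!
Let `x₀ = u, …, x_k = v` be an isometric path of `G^r`. Each step moves at most `r` in `G`,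
so `d(u, x_i) ≤ r i`; and `d(u, v) > r (k - 1)`, since otherwise `u` and `v` would be at distance
at most `k - 1` in `G^r`. Hence the level `r i - d(u, x_i)` of `x_i` lies in `[0, r)`. If `i ≤ j`
have the same level, then `d(x_i, x_j) ≤ r (j - i) = d(u, x_j) - d(u, x_i)`, so `x_i` lies on a
geodesic from `u` to `x_j`. Concatenating geodesics between consecutive vertices of one level
therefore gives a single isometric path of `G`, and the `r` levels give `r ≤ 2r - 1` paths.
-/

namespace SimpleGraph

variable {G : SimpleGraph V} {a b u v : V} {r : ℕ}

def CoverableByIsometricPaths (G : SimpleGraph V) (S : Set V) (n : ℕ) : Prop :=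
  ∃ Q : Fin n → Σ a : V, Σ b : V, G.Walk a b,
    (∀ i, IsometricPath G (Q i).2.2) ∧ ∀ x ∈ S, ∃ i, x ∈ (Q i).2.2.support

theorem CoverableByIsometricPaths.mono {S : Set V} {m n : ℕ}
    (h : G.CoverableByIsometricPaths S m) (hmn : m ≤ n) (hm : 0 < m) :
    G.CoverableByIsometricPaths S n := by
  obtain ⟨Q, hQ, hcov⟩ := h
  refine ⟨fun j => Q ⟨min j (m - 1), by omega⟩, fun j => hQ _, fun x hx => ?_⟩
  obtain ⟨i, hi⟩ := hcov x hx
  refine ⟨Fin.castLE hmn i, ?_⟩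
  have hi' : (⟨min (i : ℕ) (m - 1), by omega⟩ : Fin m) = i := Fin.ext (min_eq_left (by omega))
  show x ∈ (Q ⟨min (i : ℕ) (m - 1), _⟩).2.2.support
  rwa [hi']

theorem isometricPath_of_length_le_dist (w : G.Walk a b) (h : w.length ≤ G.dist a b) :
    IsometricPath G w :=
  have hlen : w.length = G.dist a b := le_antisymm h (dist_le w)
  ⟨w.isPath_of_length_eq_dist hlen, hlen⟩

theorem Connected.exists_walk_dist_add_length_eq_of_isChain (hG : G.Connected) :
    ∀ (l : List V) (a : V), (a :: l).IsChain (fun x y => G.dist u x + G.dist x y = G.dist u y) →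
      ∃ b, ∃ w : G.Walk a b, G.dist u a + w.length = G.dist u b ∧ ∀ x ∈ a :: l, x ∈ w.support
  | [], a, _ => ⟨a, .nil, by simp, by simp⟩
  | b :: l, a, hl => by
    obtain ⟨hab, hl⟩ := List.isChain_cons_cons.mp hl
    obtain ⟨c, w, hw, hsupp⟩ := hG.exists_walk_dist_add_length_eq_of_isChain l b hl
    obtain ⟨g, hg⟩ := hG.exists_walk_length_eq_dist a b
    refine ⟨c, g.append w, by rw [Walk.length_append]; omega, fun x hx => ?_⟩
    rcases List.mem_cons.mp hx with rfl | hx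
    · exact Walk.start_mem_support _
    · exact Walk.support_subset_support_append_right g w (hsupp x hx)

theorem Connected.exists_isometricPath_of_isChain (hG : G.Connected) (u : V) {l : List V}
    (hl : l.IsChain (fun x y => G.dist u x + G.dist x y = G.dist u y)) :
    ∃ a b, ∃ w : G.Walk a b, IsometricPath G w ∧ ∀ x ∈ l, x ∈ w.support := by
  cases l with
  | nil => exact ⟨u, u, .nil, isometricPath_of_length_le_dist _ (by simp), by simp⟩
  | cons a l =>
    obtain ⟨b, w, hw, hsupp⟩ := hG.exists_walk_dist_add_length_eq_of_isChain l a hl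
    have htri : G.dist u b ≤ G.dist u a + G.dist a b := hG.dist_triangle
    exact ⟨a, b, w, isometricPath_of_length_le_dist w (by omega), hsupp⟩

theorem Connected.dist_le_mul_length_of_power (hG : G.Connected) (w : (G.power r).Walk a b) :
    G.dist a b ≤ r * w.length := by
  induction w with
  | nil => simp
  | @cons a c b hac w ih =>
    have htri : G.dist a b ≤ G.dist a c + G.dist c b := hG.dist_triangle
    rw [Walk.length_cons, Nat.mul_succ]
    have := hac.2.2
    omega

theorem Connected.dist_getVert_le_of_power (hG : G.Connected) (p : (G.power r).Walk a b)
    {i j : ℕ} (hij : i ≤ j) : G.dist (p.getVert i) (p.getVert j) ≤ r * (j - i) := by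
  have h := hG.dist_le_mul_length_of_power ((p.drop i).take (j - i))
  rw [Walk.take_length, Walk.drop_getVert, Nat.add_sub_cancel' hij] at h
  exact h.trans (Nat.mul_le_mul_left r inf_le_left)

theorem Connected.exists_walk_power_length_le (hG : G.Connected) (hr : 0 < r) :
    ∀ (m : ℕ) (a : V), G.dist a b ≤ r * m → ∃ w : (G.power r).Walk a b, w.length ≤ m
  | 0, a, h => by
    obtain rfl : a = b := hG.dist_eq_zero_iff.mp (by simpa using h)
    exact ⟨.nil, le_rfl⟩
  | m + 1, a, h => by
    by_cases hab : a = b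
    · subst hab
      exact ⟨.nil, by simp⟩
    by_cases hle : G.dist a b ≤ r
    · have hadj : (G.power r).Adj a b := ⟨hab, hG.preconnected a b, hle⟩
      exact ⟨hadj.toWalk, by simp⟩
    obtain ⟨g, hg⟩ := hG.exists_walk_length_eq_dist a b
    have hac : G.dist a (g.getVert r) ≤ r :=
      (dist_le _).trans ((Walk.take_length g r).le.trans inf_le_left)
    have hcb : G.dist (g.getVert r) b ≤ G.dist a b - r := by
      simpa [hg] using dist_le (g.drop r)
    have hne : a ≠ g.getVert r := by
      rintro hc
      rw [← hc] at hcb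
      omega
    obtain ⟨w, hw⟩ := hG.exists_walk_power_length_le hr m (g.getVert r)
      (by rw [Nat.mul_succ] at h; omega)
    have hadj : (G.power r).Adj a (g.getVert r) := ⟨hne, hG.preconnected _ _, hac⟩
    exact ⟨.cons hadj w, by simp; omega⟩

theorem Connected.dist_power_le (hG : G.Connected) (hr : 0 < r) {m : ℕ}
    (h : G.dist a b ≤ r * m) : (G.power r).dist a b ≤ m :=
  let ⟨w, hw⟩ := hG.exists_walk_power_length_le hr m a h
  (dist_le w).trans hw


theorem Connected.dist_add_dist_getVert_eq_of_mul_sub_eq (hG : G.Connected)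
    (p : (G.power r).Walk u v) {i j : ℕ} (hij : i ≤ j)
    (hlevel : r * i - G.dist u (p.getVert i) = r * j - G.dist u (p.getVert j)) :
    G.dist u (p.getVert i) + G.dist (p.getVert i) (p.getVert j) = G.dist u (p.getVert j) := by
  have hi := hG.dist_getVert_le_of_power p (Nat.zero_le i)
  have hj := hG.dist_getVert_le_of_power p (Nat.zero_le j)
  have hbetween := hG.dist_getVert_le_of_power p hij
  have htri : G.dist u (p.getVert j) ≤ G.dist u (p.getVert i) + G.dist (p.getVert i) (p.getVert j) :=
    hG.dist_triangle
  have hmono : r * i ≤ r * j := Nat.mul_le_mul_left r hij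
  rw [Walk.getVert_zero, Nat.sub_zero] at hi hj
  rw [Nat.mul_sub] at hbetween
  omega

theorem Connected.exists_isometricPath_through_level (hG : G.Connected)
    (p : (G.power r).Walk u v) (c : ℕ) :
    ∃ a b, ∃ w : G.Walk a b, IsometricPath G w ∧
      ∀ i ≤ p.length, r * i - G.dist u (p.getVert i) = c → p.getVert i ∈ w.support := by
  let l := ((List.range (p.length + 1)).filter
    (fun i => r * i - G.dist u (p.getVert i) = c)).map p.getVert
  have hl : l.IsChain (fun x y => G.dist u x + G.dist x y = G.dist u y) := by
    refine (List.isChain_map _).mpr (List.Pairwise.isChain (List.pairwise_filter.mpr ?_))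
    refine List.pairwise_lt_range.imp fun hij hi hj => ?_
    simp only [decide_eq_true_eq] at hi hj
    exact hG.dist_add_dist_getVert_eq_of_mul_sub_eq p hij.le (hi.trans hj.symm)
  obtain ⟨a, b, w, hw, hsupp⟩ := hG.exists_isometricPath_of_isChain u hl
  refine ⟨a, b, w, hw, fun i hi hc => hsupp _ (List.mem_map_of_mem ?_)⟩
  simpa [Nat.lt_succ_iff] using ⟨hi, hc⟩

theorem IsometricPath.mul_length_sub_one_lt_dist (hG : G.Connected) (hr : 0 < r)
    {p : (G.power r).Walk u v} (hp : IsometricPath (G.power r) p) (hk : 0 < p.length) :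
    r * (p.length - 1) < G.dist u v := by
  by_contra! h
  have := hG.dist_power_le hr h
  have := hp.2
  omega

theorem IsometricPath.mul_lt_dist_getVert_add (hG : G.Connected) (hr : 0 < r)
    {p : (G.power r).Walk u v} (hp : IsometricPath (G.power r) p) {i : ℕ} (hi : i ≤ p.length) :
    r * i < G.dist u (p.getVert i) + r := by
  rcases Nat.eq_zero_or_pos i with rfl | hi0
  · simpa using hr
  have hfar := hp.mul_length_sub_one_lt_dist hG hr (by omega)
  have hrest := hG.dist_getVert_le_of_power p hi
  have htri : G.dist u v ≤ G.dist u (p.getVert i) + G.dist (p.getVert i) v := hG.dist_triangle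
  have hmono : r * i ≤ r * p.length := Nat.mul_le_mul_left r hi
  rw [Walk.getVert_length] at hrest
  rw [Nat.mul_sub, mul_one] at hfar
  rw [Nat.mul_sub] at hrest
  omega

theorem IsometricPath.coverableByIsometricPaths_power (hG : G.Connected) (hr : 0 < r)
    {p : (G.power r).Walk u v} (hp : IsometricPath (G.power r) p) :
    G.CoverableByIsometricPaths {x | x ∈ p.support} r := by
  choose a b w hw hcov using hG.exists_isometricPath_through_level p
  refine ⟨fun c => ⟨a c, b c, w c⟩, fun c => hw c, fun x hx => ?_⟩
  obtain ⟨i, rfl, hi⟩ := Walk.mem_support_iff_exists_getVert.mp hx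
  have hlevel := hp.mul_lt_dist_getVert_add hG hr hi
  exact ⟨⟨r * i - G.dist u (p.getVert i), by omega⟩, hcov _ i hi rfl⟩

end SimpleGraph

theorem red_isometric_cover_general (G : SimpleGraph V) (hG : G.Connected)
    (r : ℕ) (hr : 2 ≤ r) {u v : V} (p : (G.power r).Walk u v)
    (hp : IsometricPath (G.power r) p) :
    ∃ Q : Fin (2 * r - 1) → Σ a : V, Σ b : V, G.Walk a b,
      (∀ i, IsometricPath G (Q i).2.2) ∧
      ∀ x ∈ p.support, ∃ i, x ∈ (Q i).2.2.support :=
  (hp.coverableByIsometricPaths_power hG (by omega)).mono (by omega) (by omega)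

/-- the vertices of any red isometric path of `G^r` (all edges joining
vertices non-adjacent in `G`) can be covered by `2r - 1` isometric paths of `G`. -/
theorem red_isometric_cover (G : SimpleGraph V) (hG : G.Connected)
    (r : ℕ) (hr : 2 ≤ r) {u v : V} (p : (G.power r).Walk u v)
    (hp : IsometricPath (G.power r) p) (hred : ∀ e ∈ p.edges, e ∉ G.edgeSet) :
    ∃ Q : Fin (2 * r - 1) → Σ a : V, Σ b : V, G.Walk a b,
      (∀ i, IsometricPath G (Q i).2.2) ∧
      ∀ x ∈ p.support, ∃ i, x ∈ (Q i).2.2.support :=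
  red_isometric_cover_general G hG r hr p hp
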